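/- Let R ∈ SO(3) and let M ∈ ℝ^{3×3} be symmetric positive semidefinite. Define M̄ = Tr(M)·I₃ − M and let λ̲ denote the smallest eigenvalue of M̄. Then ‖vex(P_a(M R))‖² ≥ (λ̲/2) · ‖M R‖_I · (1 + Tr(R)). -/

import Mathlib

/-! Let `s = vex (P_a R)` and `M̄ = tr M • 1 - M`. For a rotation, Rodrigues' formula in the
axis-free form `(1 + tr R) (R + Rᵀ) = (1 + tr R) (tr R - 1) I + 4 s sᵀ` gives
`2 (1 + tr R) vex (P_a (M R)) = (1 + tr R) M̄ s + 2 s × M s`, a sum of two orthogonal vectors.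
Hence `4 ‖vex (P_a (M R))‖² ≥ |M̄ s|² ≥ λ̲ sᵀ M̄ s` unless `tr R = -1` (where the claim is
trivial), the last step because `M̄` is positive semidefinite with eigenvalues at least `λ̲`.
The same formula gives `‖M R‖_I (1 + tr R) = sᵀ M̄ s / 2`. -/

open Matrix

/-- `vex(𝒫ₐ(A))`: the vector associated to the skew-symmetric projection
`𝒫ₐ(A) = ½(A − Aᵀ)`, viewed in Euclidean 3-space. -/
noncomputable def vexPa (A : Matrix (Fin 3) (Fin 3) ℝ) : EuclideanSpace ℝ (Fin 3) :=
  (WithLp.equiv 2 (Fin 3 → ℝ)).symm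
    ![(A 2 1 - A 1 2) / 2, (A 0 2 - A 2 0) / 2, (A 1 0 - A 0 1) / 2]

/-- `‖M R‖_I = ¼ Tr(M (I₃ − R))`. -/
noncomputable def normI (M R : Matrix (Fin 3) (Fin 3) ℝ) : ℝ :=
  (M * (1 - R)).trace / 4

section PositiveSemidefinite

variable {n : Type*} [Fintype n] [DecidableEq n]

theorem Matrix.posSemidef_dotProduct_self_smul_one_sub_vecMulVec (v : n → ℝ) :
    ((v ⬝ᵥ v) • (1 : Matrix n n ℝ) - vecMulVec v v).PosSemidef := by
  have hv : (vecMulVec v v).PosSemidef := by simpa using posSemidef_vecMulVec_self_star v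
  refine .of_dotProduct_mulVec_nonneg ((isHermitian_one.smul (.all _)).sub hv.1) fun x => ?_
  simp only [star_trivial, sub_mulVec, smul_mulVec, one_mulVec, dotProduct_sub,
    dotProduct_smul, smul_eq_mul, vecMulVec_mulVec, op_smul_eq_smul]
  have cauchySchwarz : (v ⬝ᵥ x) ^ 2 ≤ (v ⬝ᵥ v) * (x ⬝ᵥ x) := by
    simpa only [dotProduct, sq] using Finset.sum_mul_sq_le_sq_mul_sq Finset.univ v x
  rw [dotProduct_comm x v]
  nlinarith [cauchySchwarz]

theorem Matrix.PosSemidef.trace_smul_one_sub {M : Matrix n n ℝ} (hM : M.PosSemidef) :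
    (M.trace • (1 : Matrix n n ℝ) - M).PosSemidef := by
  obtain ⟨m, v, rfl⟩ := posSemidef_iff_eq_sum_vecMulVec.mp hM
  simp only [star_trivial, trace_sum, trace_vecMulVec, Finset.sum_smul, ← Finset.sum_sub_distrib]
  exact posSemidef_sum _ fun k _ => posSemidef_dotProduct_self_smul_one_sub_vecMulVec (v k)

theorem Matrix.PosSemidef.mul_dotProduct_mulVec_le {N : Matrix n n ℝ} (hN : N.PosSemidef) {lam : ℝ}
    (hlam : ∀ i, lam ≤ hN.1.eigenvalues i) (x : n → ℝ) :
    lam * (x ⬝ᵥ N *ᵥ x) ≤ (N *ᵥ x) ⬝ᵥ (N *ᵥ x) := by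
  have hspec := hN.1.spectral_theorem
  rw [RCLike.ofReal_real_eq_id, Function.id_comp] at hspec
  have hdiag : N * N - lam • N = Unitary.conjStarAlgAut ℝ _ hN.1.eigenvectorUnitary
      (diagonal fun i => hN.1.eigenvalues i * (hN.1.eigenvalues i - lam)) := by
    conv_lhs => rw [hspec]
    rw [← map_mul, ← map_smul, ← map_sub, diagonal_mul_diagonal, ← diagonal_smul,
      diagonal_sub]
    congr 2
    ext i
    simp only [Pi.smul_apply, smul_eq_mul]
    ring
  have hpsd : (N * N - lam • N).PosSemidef := by
    rw [hdiag, Unitary.conjStarAlgAut_apply]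
    exact (PosSemidef.diagonal fun i => mul_nonneg (hN.eigenvalues_nonneg i)
      (sub_nonneg.2 (hlam i))).mul_mul_conjTranspose_same _
  have hx := hpsd.dotProduct_mulVec_nonneg x
  rw [star_trivial, sub_mulVec, smul_mulVec, dotProduct_sub, dotProduct_smul, smul_eq_mul,
    ← mulVec_mulVec, dotProduct_mulVec, ← mulVec_transpose,
    (isHermitian_iff_isSymm.mp hN.1).eq] at hx
  linarith

end PositiveSemidefinite

/-- `vex (P_a A)` as a plain vector rather than in `EuclideanSpace`, so that `⨯₃` applies. -/
noncomputable def axialVec (A : Matrix (Fin 3) (Fin 3) ℝ) : Fin 3 → ℝ :=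
  ![(A 2 1 - A 1 2) / 2, (A 0 2 - A 2 0) / 2, (A 1 0 - A 0 1) / 2]

theorem norm_vexPa_sq (A : Matrix (Fin 3) (Fin 3) ℝ) :
    ‖vexPa A‖ ^ 2 = axialVec A ⬝ᵥ axialVec A := by
  rw [EuclideanSpace.norm_sq_eq]
  simp [vexPa, axialVec, dotProduct, sq]

theorem axialVec_add (A B : Matrix (Fin 3) (Fin 3) ℝ) :
    axialVec (A + B) = axialVec A + axialVec B := by
  simp only [axialVec, Matrix.add_apply, add_sub_add_comm, add_div, cons_add_cons, empty_add_empty]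

theorem axialVec_smul (c : ℝ) (A : Matrix (Fin 3) (Fin 3) ℝ) :
    axialVec (c • A) = c • axialVec A := by
  simp only [axialVec, Matrix.smul_apply, smul_eq_mul, ← mul_sub, mul_div_assoc, smul_cons,
    smul_empty]

theorem axialVec_eq_zero_of_isSymm {A : Matrix (Fin 3) (Fin 3) ℝ} (hA : A.IsSymm) :
    axialVec A = 0 := by
  ext i; fin_cases i <;> simp [axialVec, ← hA.apply]

theorem axialVec_vecMulVec (x y : Fin 3 → ℝ) :
    axialVec (vecMulVec x y) = (1 / 2 : ℝ) • (y ⨯₃ x) := by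
  simp only [axialVec, vecMulVec_apply, cross_apply, smul_cons, smul_empty, smul_eq_mul]
  ring_nf

theorem axialVec_mul_sub_transpose {M : Matrix (Fin 3) (Fin 3) ℝ} (hM : M.IsSymm)
    (R : Matrix (Fin 3) (Fin 3) ℝ) :
    axialVec (M * (R - Rᵀ)) = (M.trace • 1 - M) *ᵥ axialVec R := by
  have h10 := hM.apply 1 0
  have h20 := hM.apply 2 0
  have h21 := hM.apply 2 1
  ext i
  fin_cases i <;> simp [axialVec, Matrix.mul_apply, Fin.sum_univ_three, mulVec, dotProduct,
    trace_fin_three, Matrix.one_apply, h10, h20, h21] <;> ring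

theorem one_add_trace_smul_add_transpose {R : Matrix (Fin 3) (Fin 3) ℝ}
    (hR : R ∈ specialOrthogonalGroup (Fin 3) ℝ) :
    (1 + R.trace) • (R + Rᵀ) =
      ((1 + R.trace) * (R.trace - 1)) • (1 : Matrix (Fin 3) (Fin 3) ℝ)
        + (4 : ℝ) • vecMulVec (axialVec R) (axialVec R) := by
  obtain ⟨hO, hdet⟩ := mem_specialOrthogonalGroup_iff.mp hR
  have hRRt : R * Rᵀ = 1 := (mem_orthogonalGroup_iff _ _).mp hO
  have hRtR : Rᵀ * R = 1 := (mem_orthogonalGroup_iff' _ _).mp hO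
  have hadj : adjugate R = Rᵀ := by
    calc adjugate R = adjugate R * (R * Rᵀ) := by rw [hRRt, Matrix.mul_one]
      _ = Rᵀ := by rw [← Matrix.mul_assoc, adjugate_mul, hdet, one_smul, Matrix.one_mul]
  -- `R` equals its cofactor matrix; with orthogonality, every entry of the claim is then a
  -- linear combination of these quadratic relations.
  rw [← Matrix.ext_iff] at hRtR hRRt hadj
  simp [Fin.forall_fin_succ, adjugate_fin_three, Matrix.mul_apply, Fin.sum_univ_three,
    Matrix.one_apply] at hRtR hRRt hadj
  obtain ⟨⟨_, _, _⟩, ⟨_, _, _⟩, ⟨_, _, _⟩⟩ := hRtR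
  obtain ⟨⟨_, _, _⟩, ⟨_, _, _⟩, ⟨_, _, _⟩⟩ := hRRt
  obtain ⟨⟨_, _, _⟩, ⟨_, _, _⟩, ⟨_, _, _⟩⟩ := hadj
  ext i j
  fin_cases i <;> fin_cases j <;> simp [axialVec, trace_fin_three] <;> linarith

theorem axialVec_dotProduct_self {R : Matrix (Fin 3) (Fin 3) ℝ}
    (hR : R ∈ specialOrthogonalGroup (Fin 3) ℝ) :
    axialVec R ⬝ᵥ axialVec R = (1 + R.trace) * (3 - R.trace) / 4 := by
  have h := congrArg trace (one_add_trace_smul_add_transpose hR)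
  simp only [trace_smul, trace_add, trace_transpose, trace_one, trace_vecMulVec, smul_eq_mul,
    Fintype.card_fin, Nat.cast_ofNat] at h
  linear_combination -h / 4

theorem two_mul_one_add_trace_smul_axialVec_mul {M R : Matrix (Fin 3) (Fin 3) ℝ} (hM : M.IsSymm)
    (hR : R ∈ specialOrthogonalGroup (Fin 3) ℝ) :
    (2 * (1 + R.trace)) • axialVec (M * R) =
      (1 + R.trace) • ((M.trace • 1 - M) *ᵥ axialVec R)
        + (2 : ℝ) • (axialVec R ⨯₃ (M *ᵥ axialVec R)) := by
  have hsym : (1 + R.trace) • axialVec (M * (R + Rᵀ)) =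
      (2 : ℝ) • (axialVec R ⨯₃ (M *ᵥ axialVec R)) := by
    rw [← axialVec_smul, ← mul_smul_comm, one_add_trace_smul_add_transpose hR, mul_add,
      mul_smul_comm, mul_smul_comm, Matrix.mul_one, mul_vecMulVec, axialVec_add, axialVec_smul,
      axialVec_smul, axialVec_eq_zero_of_isSymm hM, axialVec_vecMulVec, smul_zero, zero_add,
      smul_smul]
    norm_num
  have hskew := axialVec_mul_sub_transpose hM R
  have hsplit : (2 : ℝ) • (M * R) = M * (R + Rᵀ) + M * (R - Rᵀ) := by
    rw [← mul_add, add_add_sub_cancel, two_smul, mul_add]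
  rw [mul_comm, ← smul_smul, ← axialVec_smul, hsplit, axialVec_add, smul_add, hsym, hskew,
    add_comm]

theorem normI_mul_one_add_trace {M R : Matrix (Fin 3) (Fin 3) ℝ} (hM : M.IsSymm)
    (hR : R ∈ specialOrthogonalGroup (Fin 3) ℝ) :
    normI M R * (1 + R.trace) = (axialVec R ⬝ᵥ (M.trace • 1 - M) *ᵥ axialVec R) / 2 := by
  have h := congrArg (fun X => (M * X).trace) (one_add_trace_smul_add_transpose hR)
  have htr : (M * Rᵀ).trace = (M * R).trace := by
    rw [← trace_transpose, transpose_mul, transpose_transpose, hM.eq, trace_mul_comm]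
  simp only [mul_smul_comm, mul_add, Matrix.mul_one, trace_smul, trace_add, htr, mul_vecMulVec,
    trace_vecMulVec, smul_eq_mul] at h
  have hs := axialVec_dotProduct_self hR
  simp only [normI, mul_sub, Matrix.mul_one, trace_sub, sub_mulVec, smul_mulVec, one_mulVec,
    dotProduct_sub, dotProduct_smul, smul_eq_mul, hs, dotProduct_comm (axialVec R) (M *ᵥ _)]
  linear_combination (-1 / 8 : ℝ) * h

theorem dotProduct_mulVec_le_four_mul_norm_vexPa_sq {M R : Matrix (Fin 3) (Fin 3) ℝ}
    (hM : M.IsSymm) (hR : R ∈ specialOrthogonalGroup (Fin 3) ℝ) (ht : 1 + R.trace ≠ 0) :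
    ((M.trace • 1 - M) *ᵥ axialVec R) ⬝ᵥ ((M.trace • 1 - M) *ᵥ axialVec R)
      ≤ 4 * ‖vexPa (M * R)‖ ^ 2 := by
  have h := congrArg (fun v => v ⬝ᵥ v) (two_mul_one_add_trace_smul_axialVec_mul hM hR)
  set s := axialVec R
  set u := (M.trace • 1 - M) *ᵥ s
  set w := s ⨯₃ (M *ᵥ s)
  have horth : u ⬝ᵥ w = 0 := by
    simp only [u, w, sub_mulVec, smul_mulVec, one_mulVec, sub_dotProduct, smul_dotProduct,
      dot_self_cross, dot_cross_self, smul_zero, sub_zero]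
  simp only [smul_dotProduct, dotProduct_smul, add_dotProduct, dotProduct_add, horth,
    dotProduct_comm w u, smul_eq_mul] at h
  have hw : 0 ≤ w ⬝ᵥ w := by simpa using dotProduct_star_self_nonneg w
  have ht2 : 0 < (1 + R.trace) ^ 2 := by positivity
  rw [norm_vexPa_sq]
  refine le_of_mul_le_mul_left ?_ ht2
  nlinarith

/-- for `R ∈ SO(3)` and `M` symmetric positive semidefinite, with
`M̄ = Tr(M)·I₃ − M` and `λ̲` its smallest eigenvalue,
`‖vex(𝒫ₐ(M R))‖² ≥ (λ̲/2) ‖M R‖_I (1 + Tr(R))`. -/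
theorem vexPa_sq_ge (R M : Matrix (Fin 3) (Fin 3) ℝ)
    (hR : Rᵀ * R = 1) (hRdet : R.det = 1)
    (hM : M.PosSemidef)
    (Mbar : Matrix (Fin 3) (Fin 3) ℝ)
    (hMbar : Mbar = M.trace • (1 : Matrix (Fin 3) (Fin 3) ℝ) - M)
    (hHerm : Mbar.IsHermitian)
    (lam : ℝ) (hlam : lam = ⨅ i, hHerm.eigenvalues i) :
    ‖vexPa (M * R)‖ ^ 2 ≥ lam / 2 * normI M R * (1 + R.trace) := by
  have hSO : R ∈ specialOrthogonalGroup (Fin 3) ℝ :=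
    mem_specialOrthogonalGroup_iff.mpr ⟨(mem_orthogonalGroup_iff' _ _).mpr hR, hRdet⟩
  have hMsymm : M.IsSymm := isHermitian_iff_isSymm.mp hM.1
  have hMbarPSD : Mbar.PosSemidef := hMbar ▸ hM.trace_smul_one_sub
  have hlam_le : ∀ i, lam ≤ hMbarPSD.1.eigenvalues i := fun i =>
    hlam ▸ ciInf_le (Set.finite_range _).bddBelow i
  rcases eq_or_ne (1 + R.trace) 0 with ht | ht
  · rw [ht, mul_zero]
    positivity
  · calc lam / 2 * normI M R * (1 + R.trace)
          = lam * (axialVec R ⬝ᵥ Mbar *ᵥ axialVec R) / 4 := by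
          rw [mul_assoc, normI_mul_one_add_trace hMsymm hSO, hMbar]
          ring
      _ ≤ (Mbar *ᵥ axialVec R) ⬝ᵥ (Mbar *ᵥ axialVec R) / 4 := by
          gcongr
          exact hMbarPSD.mul_dotProduct_mulVec_le hlam_le _
      _ ≤ ‖vexPa (M * R)‖ ^ 2 := by
          rw [hMbar]
          linarith [dotProduct_mulVec_le_four_mul_norm_vexPa_sq hMsymm hSO ht]
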